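/- arXiv:1108.0655 — 3 statements merged into one kernel-verified Lean document; each statement's English description precedes it below -/
import Mathlib

section
/- Let q be a prime and G a profinite group acted on coprimely by an elementary abelian q-group A of order q^3, and let A_1, …, A_s be the maximal subgroups of A. If H is a closed A-invariant subgroup of G, then H is the closed subgroup topologically generated by the fixed-point subgroups C_H(A_1), …, C_H(A_s); that is, H equals the closure of the abstract subgroup generated by C_H(A_1) ∪ ⋯ ∪ C_H(A_s). -/
/-!
A finite group `T` of order prime to `q` is generated by the `C_T(B)`, by induction on `|T|`. An
`A`-invariant normal subgroup `N` splits the problem into `N` and `T ⧸ N`: `B`-fixed points of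
`T ⧸ N` lift to `B`-fixed points of `T`, because a `q`-group acting on a coset `x N` of order prime
to `q` fixes a point of it. Otherwise either `Z(T) = 1`, and `T` is generated by its `A`-invariant
Sylow subgroups, which are proper, or `T` is abelian and `A`-irreducible. In the abelian case the
norm maps `t ↦ ∏ᵢ bⁱ • t` of the elements `b` acting nontrivially vanish, and if the kernel of the
action had index at least `q²`, two independent such elements would force `t ^ q = 1` on all of
`T`; so the kernel contains a maximal subgroup `B`, and `C_T(B) = T`.

Profinite case: for every `A`-invariant open normal `N`, apply the finite case to the image of `H`
in `G ⧸ N`, and lift its `B`-fixed points to `C_H(B)` by compactness, intersecting over all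
invariant open normal subgroups the closed nonempty sets of elements of the coset fixed modulo them.
-/

/-- The subgroup of elements of `G` fixed by every element of the subgroup `B` of `A`. -/
def fixedSubgroupOf {A G : Type*} [Group A] [Group G] [MulDistribMulAction A G]
    (B : Subgroup A) : Subgroup G where
  carrier := {g | ∀ b ∈ B, b • g = g}
  one_mem' := fun b _ => smul_one b
  mul_mem' := by
    intro x y hx hy b hb
    rw [smul_mul', hx b hb, hy b hb]
  inv_mem' := by
    intro x hx b hb
    rw [smul_inv', hx b hb]

section Invariant

variable {A T : Type*} [Group A] [Group T] [MulDistribMulAction A T]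

abbrev Subgroup.mulDistribMulActionOfInvariant (P : Subgroup T)
    (hP : ∀ a : A, ∀ x ∈ P, a • x ∈ P) : MulDistribMulAction A P where
  smul a x := ⟨a • (x : T), hP a x x.2⟩
  one_smul x := Subtype.ext (one_smul A (x : T))
  mul_smul a b x := Subtype.ext (mul_smul a b (x : T))
  smul_mul a x y := Subtype.ext (smul_mul' a (x : T) y)
  smul_one a := Subtype.ext (smul_one a)

abbrev QuotientGroup.mulDistribMulActionOfInvariant (N : Subgroup T) [N.Normal]
    (hN : ∀ a : A, ∀ x ∈ N, a • x ∈ N) : MulDistribMulAction A (T ⧸ N) where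
  smul a := QuotientGroup.map N N (MulDistribMulAction.toMonoidHom T a) (hN a)
  one_smul x := QuotientGroup.induction_on x fun t => congrArg _ (one_smul A t)
  mul_smul a b x := QuotientGroup.induction_on x fun t => congrArg _ (mul_smul a b t)
  smul_mul a x y := QuotientGroup.induction_on x fun s => QuotientGroup.induction_on y fun t =>
    congrArg _ (smul_mul' a s t)
  smul_one a := congrArg _ (smul_one a)

theorem Subgroup.map_subtype_fixedSubgroupOf (P : Subgroup T)
    (hP : ∀ a : A, ∀ x ∈ P, a • x ∈ P) (B : Subgroup A) :
    letI := P.mulDistribMulActionOfInvariant hP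
    (fixedSubgroupOf (G := P) B).map P.subtype = P ⊓ fixedSubgroupOf B := by
  ext x
  constructor
  · rintro ⟨y, hy, rfl⟩
    exact ⟨y.2, fun b hb => congrArg Subtype.val (hy b hb)⟩
  · rintro ⟨hxP, hx⟩
    exact ⟨⟨x, hxP⟩, fun b hb => Subtype.ext (hx b hb), rfl⟩

theorem Subgroup.le_iSup_inf_fixedSubgroupOf_of_eq_top (P : Subgroup T)
    (hP : ∀ a : A, ∀ x ∈ P, a • x ∈ P)
    (htop : letI := P.mulDistribMulActionOfInvariant hP
      ⨆ (B : Subgroup A) (_ : IsCoatom B), fixedSubgroupOf (G := P) B = ⊤) :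
    P ≤ ⨆ (B : Subgroup A) (_ : IsCoatom B), P ⊓ fixedSubgroupOf (G := T) B := by
  let := P.mulDistribMulActionOfInvariant hP
  simpa only [← P.map_subtype_fixedSubgroupOf hP, ← Subgroup.map_iSup, htop,
    ← MonoidHom.range_eq_map, Subgroup.range_subtype] using le_rfl

theorem Subgroup.smul_mem_of_characteristic (P : Subgroup T) [P.Characteristic]
    (a : A) {x : T} (hx : x ∈ P) : a • x ∈ P :=
  Subgroup.characteristic_iff_map_le.mp ‹_› (MulDistribMulAction.toMulAut A T a) ⟨x, hx, rfl⟩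

end Invariant

section CosetFixedPoint

open scoped Pointwise

variable {A T : Type*} [Group A] [Group T] [MulDistribMulAction A T] {q : ℕ} [Fact q.Prime]

theorem exists_mem_fixedSubgroupOf_inv_mul_mem {B : Subgroup A} (hB : IsPGroup q B)
    (R : Subgroup T) (hR : ∀ b ∈ B, ∀ x ∈ R, b • x ∈ R) (hqR : ¬ q ∣ Nat.card R)
    {x : T} (hx : ∀ b ∈ B, x⁻¹ * (b • x) ∈ R) :
    ∃ y ∈ fixedSubgroupOf (G := T) B, x⁻¹ * y ∈ R := by
  let X : SubMulAction B T :=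
    { carrier := x • (R : Set T)
      smul_mem' := fun b y hy => by
        rw [mem_leftCoset_iff] at hy ⊢
        change x⁻¹ * ((b : A) • y) ∈ R
        have : x⁻¹ * ((b : A) • y) = x⁻¹ * ((b : A) • x) * ((b : A) • (x⁻¹ * y)) := by
          simp only [smul_mul', smul_inv', mul_assoc, mul_inv_cancel_left]
        rw [this]
        exact R.mul_mem (hx b b.2) (hR b b.2 _ hy) }
  have hqX : ¬ q ∣ Nat.card X := by
    rwa [show Nat.card X = Nat.card R from Nat.card_congr (Subgroup.leftCosetEquivSubgroup x)]
  obtain ⟨y, hy⟩ := hB.nonempty_fixed_point_of_prime_not_dvd_card X hqX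
  exact ⟨y, fun b hb => congrArg Subtype.val (hy ⟨b, hb⟩), (mem_leftCoset_iff x).mp y.2⟩

theorem fixedSubgroupOf_quotient_le_map {B : Subgroup A} (hB : IsPGroup q B)
    (N : Subgroup T) [N.Normal] (hN : ∀ a : A, ∀ x ∈ N, a • x ∈ N) (hqN : ¬ q ∣ Nat.card N) :
    letI := QuotientGroup.mulDistribMulActionOfInvariant N hN
    fixedSubgroupOf (G := T ⧸ N) B ≤ (fixedSubgroupOf B).map (QuotientGroup.mk' N) := by
  let := QuotientGroup.mulDistribMulActionOfInvariant N hN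
  intro z hz
  obtain ⟨x, rfl⟩ := QuotientGroup.mk_surjective z
  have hx : ∀ b ∈ B, x⁻¹ * (b • x) ∈ N := fun b hb =>
    QuotientGroup.eq.mp (hz b hb).symm
  obtain ⟨y, hy, hxy⟩ := exists_mem_fixedSubgroupOf_inv_mul_mem hB N (fun b _ => hN b) hqN hx
  exact ⟨y, hy, (QuotientGroup.eq.mpr hxy).symm⟩

theorem exists_mem_coset_inv_mul_smul_mem {B : Subgroup A} (hB : IsPGroup q B)
    {H N M : Subgroup T} (hH : ∀ a : A, ∀ x ∈ H, a • x ∈ H) (hN : ∀ a : A, ∀ x ∈ N, a • x ∈ N)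
    [M.Normal] (hM : ∀ a : A, ∀ x ∈ M, a • x ∈ M) (hqM : ¬ q ∣ M.index) {h : T} (hh : h ∈ H)
    (hfix : ∀ b ∈ B, h⁻¹ * (b • h) ∈ N) :
    ∃ y ∈ H, h⁻¹ * y ∈ N ∧ ∀ b ∈ B, y⁻¹ * (b • y) ∈ M := by
  let := QuotientGroup.mulDistribMulActionOfInvariant M hM
  set R := (H ⊓ N).map (QuotientGroup.mk' M)
  have hR : ∀ b ∈ B, ∀ z ∈ R, b • z ∈ R := by
    rintro b - _ ⟨x, hx, rfl⟩
    exact ⟨b • x, ⟨hH b x hx.1, hN b x hx.2⟩, rfl⟩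
  have hqR : ¬ q ∣ Nat.card R := fun hdvd =>
    hqM (hdvd.trans (M.index_eq_card ▸ Subgroup.card_subgroup_dvd_card R))
  have hhR : ∀ b ∈ B, (h : T ⧸ M)⁻¹ * (b • (h : T ⧸ M)) ∈ R := fun b hb =>
    ⟨h⁻¹ * (b • h), ⟨H.mul_mem (H.inv_mem hh) (hH b h hh), hfix b hb⟩, rfl⟩
  obtain ⟨z, hz, w, ⟨hwH, hwN⟩, hwz⟩ := exists_mem_fixedSubgroupOf_inv_mul_mem hB R hR hqR hhR
  have hyz : ((h * w : T) : T ⧸ M) = z := by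
    rw [QuotientGroup.mk_mul, ← QuotientGroup.mk'_apply M w, hwz, mul_inv_cancel_left]
  refine ⟨h * w, H.mul_mem hh hwH, by rwa [inv_mul_cancel_left], fun b hb => ?_⟩
  rw [← QuotientGroup.eq]
  exact hyz.trans ((hz b hb).symm.trans (congrArg (b • ·) hyz.symm))

end CosetFixedPoint

theorem IsPGroup.of_forall_pow_eq_one {E : Type*} [Group E] {q : ℕ} (h : ∀ x : E, x ^ q = 1) :
    IsPGroup q E :=
  fun x => ⟨1, by rw [pow_one, h x]⟩

theorem Subgroup.isCoatom_of_index_prime {E : Type*} [Group E] {K : Subgroup E}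
    (h : K.index.Prime) : IsCoatom K := by
  have : K.FiniteIndex := ⟨h.ne_zero⟩
  refine ⟨fun htop => h.ne_one (htop ▸ Subgroup.index_top), fun L hKL => ?_⟩
  rcases h.eq_one_or_self_of_dvd _ (Subgroup.index_dvd_of_le hKL.le) with h1 | hK
  · exact Subgroup.index_eq_one.mp h1
  · exact absurd hK (Subgroup.index_strictAnti hKL).ne

theorem Subgroup.card_lt_of_ne_top {T : Type*} [Group T] [Finite T] {H : Subgroup T}
    (hH : H ≠ ⊤) : Nat.card H < Nat.card T := by
  rw [← H.card_mul_index]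
  exact lt_mul_of_one_lt_right Nat.card_pos (Subgroup.one_lt_index_of_ne_top hH)

theorem QuotientGroup.card_lt_of_ne_bot {T : Type*} [Group T] [Finite T] {N : Subgroup T}
    [N.Normal] (hN : N ≠ ⊥) : Nat.card (T ⧸ N) < Nat.card T := by
  rw [← Subgroup.index_eq_card, ← N.index_mul_card]
  exact lt_mul_of_one_lt_right Nat.card_pos (N.one_lt_card_iff_ne_bot.mpr hN)

theorem Subgroup.eq_top_of_forall_sylow_le {T : Type*} [Group T] [Finite T] {R : Subgroup T}
    (h : ∀ (p : ℕ) [Fact p.Prime], ∃ P : Sylow p T, (P : Subgroup T) ≤ R) : R = ⊤ := by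
  by_contra hR
  have hp : Fact R.index.minFac.Prime := ⟨Nat.minFac_prime (mt Subgroup.index_eq_one.mp hR)⟩
  obtain ⟨P, hPR⟩ := h R.index.minFac
  exact P.not_dvd_index ((Nat.minFac_dvd _).trans (Subgroup.index_dvd_of_le hPR))

theorem exists_mul_pow_ne_one {E : Type*} [Group E] [Finite E] {q : ℕ} (hq : q.Prime)
    (hE : ∀ x : E, x ^ q = 1)
    (hcard : q < Nat.card E) : ∃ x y : E, y ≠ 1 ∧ ∀ j : ℕ, x * y ^ j ≠ 1 := by
  have : Nontrivial E := Finite.one_lt_card_iff_nontrivial.mp (hq.one_lt.trans hcard)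
  obtain ⟨y, hy⟩ := exists_ne (1 : E)
  have hne : Subgroup.zpowers y ≠ ⊤ := fun htop => by
    have := orderOf_le_of_pow_eq_one hq.pos (hE y)
    rw [← Nat.card_zpowers, htop, Subgroup.card_top] at this
    omega
  obtain ⟨x, hx⟩ := SetLike.exists_not_mem_of_ne_top _ hne
  refine ⟨x, y, hy, fun j h => hx ?_⟩
  rw [eq_inv_of_mul_eq_one_left h]
  exact Subgroup.inv_mem _ (Subgroup.npow_mem_zpowers y j)

section Abelian

open Finset

variable {A T : Type*} {q : ℕ}

theorem prod_range_pow_mul_eq {M β : Type*} [Monoid M] [CommMonoid β] (hq : q.Prime)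
    {c : M} (hc : c ^ q = 1) {i : ℕ} (hi : ¬ q ∣ i) (f : M → β) :
    ∏ j ∈ range q, f (c ^ (j * i)) = ∏ j ∈ range q, f (c ^ j) := by
  have hmaps : Set.MapsTo (fun j => j * i % q) (range q) (range q) :=
    fun j _ => mem_range.2 (Nat.mod_lt _ hq.pos)
  have hinj : Set.InjOn (fun j => j * i % q) (range q) := fun j hj j' hj' h =>
    Nat.ModEq.eq_of_lt_of_lt
      (Nat.ModEq.cancel_right_of_coprime (hq.coprime_iff_not_dvd.2 hi) h)
      (mem_range.1 hj) (mem_range.1 hj')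
  exact prod_nbij _ hmaps hinj (surjOn_of_injOn_of_card_le _ hmaps hinj le_rfl)
    fun j _ => by rw [pow_eq_pow_mod _ hc]

variable [CommGroup T]

def smulNorm [Monoid A] [MulDistribMulAction A T] (q : ℕ) (b : A) (t : T) : T :=
  ∏ i ∈ range q, b ^ i • t

theorem smul_smulNorm [Monoid A] [MulDistribMulAction A T] {b : A} (hb : b ^ q = 1) (t : T) :
    b • smulNorm q b t = smulNorm q b t := by
  have hshift := prod_range_succ' (fun i => b ^ i • t) q
  rw [prod_range_succ, hb, pow_zero] at hshift
  simp only [smulNorm, smul_prod', smul_smul, ← pow_succ']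
  exact mul_right_cancel hshift.symm

theorem mem_fixedSubgroupOf_zpowers_iff [Group A] [MulDistribMulAction A T] {b : A} {x : T} :
    x ∈ fixedSubgroupOf (G := T) (Subgroup.zpowers b) ↔ b • x = x :=
  ⟨fun h => h b (Subgroup.mem_zpowers b), fun h _ hc =>
    MulAction.mem_stabilizer_iff.mp
      (Subgroup.zpowers_le.mpr (MulAction.mem_stabilizer_iff.mpr h) hc)⟩

theorem smul_mem_fixedSubgroupOf [CommGroup A] [MulDistribMulAction A T] {B : Subgroup A}
    (a : A) {x : T} (hx : x ∈ fixedSubgroupOf (G := T) B) : a • x ∈ fixedSubgroupOf (G := T) B :=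
  fun b hb => by rw [smul_smul, mul_comm, ← smul_smul, hx b hb]

theorem smulNorm_eq_one [CommGroup A] [MulDistribMulAction A T] {b : A} (hb : b ^ q = 1)
    (hirr : ∀ P : Subgroup T, (∀ a : A, ∀ x ∈ P, a • x ∈ P) → P = ⊥ ∨ P = ⊤)
    (hbK : b ∉ (MulDistribMulAction.toMulAut A T).ker) (t : T) : smulNorm q b t = 1 := by
  have hfix : smulNorm q b t ∈ fixedSubgroupOf (G := T) (Subgroup.zpowers b) :=
    mem_fixedSubgroupOf_zpowers_iff.mpr (smul_smulNorm hb t)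
  rcases hirr _ (fun a _ => smul_mem_fixedSubgroupOf a) with hbot | htop
  · exact Subgroup.mem_bot.mp (hbot ▸ hfix)
  · refine absurd (MonoidHom.mem_ker.mpr (MulEquiv.ext fun x => ?_)) hbK
    exact mem_fixedSubgroupOf_zpowers_iff.mp (htop ▸ Subgroup.mem_top x)

/-- In the double product `∏ⱼ ∏ᵢ (a * a' ^ j) ^ i • t` the row `i = 0` is `t ^ q`, while for
`0 < i < q` the reindexing `j ↦ j * i mod q` turns the row into `a ^ i • smulNorm q a' t`. -/
theorem pow_eq_one_of_smulNorm_eq_one [CommMonoid A] [MulDistribMulAction A T] (hq : q.Prime)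
    {a a' : A} (ha' : a' ^ q = 1) (hN : ∀ j : ℕ, ∀ t : T, smulNorm q (a * a' ^ j) t = 1)
    (hN' : ∀ t : T, smulNorm q a' t = 1) (t : T) : t ^ q = 1 := by
  obtain ⟨r, rfl⟩ : ∃ r, q = r + 1 := ⟨q - 1, (Nat.sub_add_cancel hq.one_le).symm⟩
  have hrow : ∀ i ∈ range r, ∏ j ∈ range (r + 1), (a ^ (i + 1) * a' ^ (j * (i + 1))) • t = 1 := by
    intro i hi
    have hndvd : ¬ r + 1 ∣ i + 1 :=
      Nat.not_dvd_of_pos_of_lt i.succ_pos (by simpa using mem_range.1 hi)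
    simp only [mul_smul, ← smul_prod']
    rw [prod_range_pow_mul_eq hq ha' hndvd (· • t), ← smulNorm, hN', smul_one]
  calc t ^ (r + 1)
      = (∏ i ∈ range r, ∏ j ∈ range (r + 1), (a ^ (i + 1) * a' ^ (j * (i + 1))) • t) *
          ∏ j ∈ range (r + 1), (a ^ 0 * a' ^ (j * 0)) • t := by
        simp [prod_eq_one hrow]
    _ = ∏ j ∈ range (r + 1), smulNorm (r + 1) (a * a' ^ j) t := by
        rw [← prod_range_succ' (fun i => ∏ j ∈ range (r + 1), (a ^ i * a' ^ (j * i)) • t),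
          prod_comm]
        simp only [smulNorm, mul_pow, pow_mul]
    _ = 1 := prod_eq_one fun j _ => hN j t

theorem exists_isCoatom_fixedSubgroupOf_eq_top [CommGroup A] [Finite A] [Nontrivial A]
    [MulDistribMulAction A T] (hq : q.Prime) (hA : ∀ a : A, a ^ q = 1)
    (hqT : ¬ q ∣ Nat.card T)
    (hirr : ∀ P : Subgroup T, (∀ a : A, ∀ x ∈ P, a • x ∈ P) → P = ⊥ ∨ P = ⊤) :
    ∃ B : Subgroup A, IsCoatom B ∧ fixedSubgroupOf (G := T) B = ⊤ := by
  have : Fact q.Prime := ⟨hq⟩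
  set K := (MulDistribMulAction.toMulAut A T).ker
  have hfixK : ∀ B ≤ K, fixedSubgroupOf (G := T) B = ⊤ := fun B hBK =>
    eq_top_iff.mpr fun t _ b hb => congrArg (· t) (MonoidHom.mem_ker.mp (hBK hb))
  obtain ⟨k, hk⟩ := (IsPGroup.of_forall_pow_eq_one hA).index K
  match k, hk with
  | 0, hk =>
    obtain ⟨B, hB⟩ := IsCoatomic.exists_coatom (α := Subgroup A)
    exact ⟨B, hB, hfixK B (Subgroup.index_eq_one.mp hk ▸ le_top)⟩
  | 1, hk => exact ⟨K, Subgroup.isCoatom_of_index_prime (by rwa [hk, pow_one]), hfixK K le_rfl⟩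
  | k + 2, hk =>
    exfalso
    have hcard : q < Nat.card (A ⧸ K) := by
      rw [← Subgroup.index_eq_card, hk]
      calc q < q ^ 2 := by nlinarith [hq.two_le]
        _ ≤ q ^ (k + 2) := Nat.pow_le_pow_right hq.pos (by omega)
    obtain ⟨x, y, hy, hxy⟩ := exists_mul_pow_ne_one hq
      (fun z => QuotientGroup.induction_on z fun a => congrArg _ (hA a)) hcard
    obtain ⟨a, rfl⟩ := QuotientGroup.mk_surjective x
    obtain ⟨a', rfl⟩ := QuotientGroup.mk_surjective y
    have ha' : a' ∉ K := fun h => hy ((QuotientGroup.eq_one_iff a').mpr h)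
    have hT : ∀ t : T, t ^ q = 1 := pow_eq_one_of_smulNorm_eq_one hq (hA a')
      (fun j => smulNorm_eq_one (hA _) hirr fun h => hxy j ((QuotientGroup.eq_one_iff _).mpr h))
      (smulNorm_eq_one (hA a') hirr ha')
    have htriv : ∀ t : T, t = 1 := fun t => orderOf_eq_one_iff.mp <|
      Nat.eq_one_of_dvd_coprimes (hq.coprime_iff_not_dvd.mpr hqT)
        (orderOf_dvd_of_pow_eq_one (hT t)) (orderOf_dvd_natCard t)
    exact ha' (MonoidHom.mem_ker.mpr (MulEquiv.ext fun t => (htriv _).trans (htriv _).symm))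

end Abelian

section Reduction

variable {A T : Type*} [Group A] [Group T] [MulDistribMulAction A T] {q : ℕ} [Fact q.Prime]

theorem exists_sylow_smul_mem [Finite T] (hA : IsPGroup q A) (hqT : ¬ q ∣ Nat.card T)
    (p : ℕ) [Fact p.Prime] : ∃ P : Sylow p T, ∀ a : A, ∀ x ∈ P, a • x ∈ P := by
  have hqS : ¬ q ∣ Nat.card (Sylow p T) := fun h =>
    hqT (h.trans ((Sylow.card_dvd_index default).trans (Subgroup.index_dvd_card _)))
  obtain ⟨P, hP⟩ := hA.nonempty_fixed_point_of_prime_not_dvd_card (Sylow p T) hqS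
  refine ⟨P, fun a x hx => ?_⟩
  rw [← hP a]
  exact Subgroup.smul_mem_pointwise_smul x a _ hx

theorem iSup_fixedSubgroupOf_eq_top_of_normal (hA : IsPGroup q A) (N : Subgroup T) [N.Normal]
    (hN : ∀ a : A, ∀ x ∈ N, a • x ∈ N) (hqN : ¬ q ∣ Nat.card N)
    (hNtop : letI := N.mulDistribMulActionOfInvariant hN
      ⨆ (B : Subgroup A) (_ : IsCoatom B), fixedSubgroupOf (G := N) B = ⊤)
    (hQtop : letI := QuotientGroup.mulDistribMulActionOfInvariant N hN
      ⨆ (B : Subgroup A) (_ : IsCoatom B), fixedSubgroupOf (G := T ⧸ N) B = ⊤) :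
    ⨆ (B : Subgroup A) (_ : IsCoatom B), fixedSubgroupOf (G := T) B = ⊤ := by
  let := QuotientGroup.mulDistribMulActionOfInvariant N hN
  set R := ⨆ (B : Subgroup A) (_ : IsCoatom B), fixedSubgroupOf (G := T) B
  have hNR : N ≤ R := (N.le_iSup_inf_fixedSubgroupOf_of_eq_top hN hNtop).trans
    (iSup₂_mono fun _ _ => inf_le_right)
  have hmap : R.map (QuotientGroup.mk' N) = ⊤ := by
    refine eq_top_iff.mpr (hQtop ▸ ?_)
    simp only [R, Subgroup.map_iSup]
    exact iSup₂_mono fun B _ => fixedSubgroupOf_quotient_le_map (hA.to_subgroup B) N hN hqN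
  rw [← sup_eq_left.mpr hNR, ← QuotientGroup.ker_mk' N, ← Subgroup.comap_map_eq, hmap,
    Subgroup.comap_top]

end Reduction

section FiniteCase

variable {A : Type*} [CommGroup A] [Finite A] [Nontrivial A] {q : ℕ} [hq : Fact q.Prime]

theorem iSup_fixedSubgroupOf_eq_top (hA : ∀ a : A, a ^ q = 1) {T : Type*} [Group T]
    [MulDistribMulAction A T] (hqT : ¬ q ∣ Nat.card T) :
    ⨆ (B : Subgroup A) (_ : IsCoatom B), fixedSubgroupOf (G := T) B = ⊤ := by
  have hAq : IsPGroup q A := .of_forall_pow_eq_one hA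
  induction hn : Nat.card T using Nat.strong_induction_on generalizing T with
  | _ n ih =>
  have : Finite T := Nat.finite_of_card_ne_zero fun h => hqT (h ▸ dvd_zero q)
  have hqH : ∀ H : Subgroup T, ¬ q ∣ Nat.card H := fun H h =>
    hqT (h.trans (Subgroup.card_subgroup_dvd_card H))
  by_cases hN : ∃ N : Subgroup T, N.Normal ∧ (∀ a : A, ∀ x ∈ N, a • x ∈ N) ∧ N ≠ ⊥ ∧ N ≠ ⊤
  · obtain ⟨N, hNn, hN, hNbot, hNtop⟩ := hN
    let := N.mulDistribMulActionOfInvariant hN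
    let := QuotientGroup.mulDistribMulActionOfInvariant N hN
    have hqQ : ¬ q ∣ Nat.card (T ⧸ N) := fun h =>
      hqT (h.trans (Subgroup.index_eq_card N ▸ N.index_dvd_card))
    exact iSup_fixedSubgroupOf_eq_top_of_normal hAq N hN (hqH N)
      (ih _ (hn ▸ Subgroup.card_lt_of_ne_top hNtop) (hqH N) rfl)
      (ih _ (hn ▸ QuotientGroup.card_lt_of_ne_bot hNbot) hqQ rfl)
  push Not at hN
  rcases subsingleton_or_nontrivial T with hT | hT
  · exact eq_top_iff.mpr fun t _ => Subsingleton.elim 1 t ▸ Subgroup.one_mem _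
  by_cases hZ : Subgroup.center T = ⊥
  · refine Subgroup.eq_top_of_forall_sylow_le fun p _ => ?_
    obtain ⟨P, hP⟩ := exists_sylow_smul_mem hAq hqT p
    have hPtop : (P : Subgroup T) ≠ ⊤ := fun htop =>
      ((htop ▸ P.isPGroup').of_equiv Subgroup.topEquiv).bot_lt_center.ne' hZ
    let := (P : Subgroup T).mulDistribMulActionOfInvariant hP
    refine ⟨P, ((P : Subgroup T).le_iSup_inf_fixedSubgroupOf_of_eq_top hP ?_).trans
      (iSup₂_mono fun _ _ => inf_le_right)⟩
    exact ih _ (hn ▸ Subgroup.card_lt_of_ne_top hPtop) (hqH P) rfl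
  have hZtop := hN _ inferInstance (fun a _ => (Subgroup.center T).smul_mem_of_characteristic a) hZ
  let : CommGroup T :=
    { mul_comm := fun x y => Subgroup.mem_center_iff.mp (hZtop ▸ Subgroup.mem_top y) x }
  obtain ⟨B, hB, hfix⟩ := exists_isCoatom_fixedSubgroupOf_eq_top hq.out hA hqT
    fun P hP => or_iff_not_imp_left.mpr (hN P inferInstance hP)
  exact eq_top_iff.mpr (hfix ▸ le_iSup₂ (f := fun B (_ : IsCoatom B) => fixedSubgroupOf B) B hB)

theorem Subgroup.le_iSup_inf_fixedSubgroupOf (hA : ∀ a : A, a ^ q = 1) {T : Type*} [Group T]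
    [MulDistribMulAction A T] (H : Subgroup T) (hH : ∀ a : A, ∀ x ∈ H, a • x ∈ H)
    (hqH : ¬ q ∣ Nat.card H) :
    H ≤ ⨆ (B : Subgroup A) (_ : IsCoatom B), H ⊓ fixedSubgroupOf (G := T) B :=
  let := H.mulDistribMulActionOfInvariant hH
  H.le_iSup_inf_fixedSubgroupOf_of_eq_top hH (iSup_fixedSubgroupOf_eq_top hA hqH)

end FiniteCase

section Profinite

variable {A G : Type*} [Group G] [TopologicalSpace G] [IsTopologicalGroup G] [CompactSpace G]
  [TotallyDisconnectedSpace G]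

theorem exists_normal_isOpen_smul_mem_subset [Group A] [Finite A] [MulDistribMulAction A G]
    (hcont : ∀ a : A, Continuous fun g : G => a • g) {U : Set G} (hU : IsOpen U)
    (h1 : (1 : G) ∈ U) : ∃ N : Subgroup G, N.Normal ∧ IsOpen (N : Set G) ∧
      (∀ a : A, ∀ x ∈ N, a • x ∈ N) ∧ (N : Set G) ⊆ U := by
  obtain ⟨N, hNU⟩ := ProfiniteGrp.exist_openNormalSubgroup_sub_open_nhds_of_one hU h1
  refine ⟨⨅ a : A, N.toSubgroup.comap (MulDistribMulAction.toMonoidHom G a),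
    Subgroup.normal_iInf_normal fun a => N.isNormal'.comap _, ?_, fun b x hx => ?_,
    fun x hx => hNU ?_⟩
  · rw [Subgroup.coe_iInf]
    exact isOpen_iInter_of_finite fun a => N.isOpen.preimage (hcont a)
  · simp only [Subgroup.mem_iInf, Subgroup.mem_comap, MulDistribMulAction.toMonoidHom_apply,
      smul_smul] at hx ⊢
    exact fun a => hx (a * b)
  · have hx1 := Subgroup.mem_iInf.mp hx 1
    rwa [Subgroup.mem_comap, MulDistribMulAction.toMonoidHom_apply, one_smul] at hx1

variable {q : ℕ} [Fact q.Prime]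

theorem exists_mem_inf_fixedSubgroupOf_inv_mul_mem [Group A] [Finite A] [MulDistribMulAction A G]
    (hcont : ∀ a : A, Continuous fun g : G => a • g)
    (hcoprime : ∀ M : Subgroup G, M.Normal → IsOpen (M : Set G) → ¬ q ∣ M.index)
    {B : Subgroup A} (hB : IsPGroup q B) {H N : Subgroup G} (hHclosed : IsClosed (H : Set G))
    (hH : ∀ a : A, ∀ x ∈ H, a • x ∈ H) (hNopen : IsOpen (N : Set G))
    (hN : ∀ a : A, ∀ x ∈ N, a • x ∈ N) {h : G} (hh : h ∈ H)
    (hfix : ∀ b ∈ B, h⁻¹ * (b • h) ∈ N) :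
    ∃ y ∈ H ⊓ fixedSubgroupOf (G := G) B, h⁻¹ * y ∈ N := by
  let ι := {M : Subgroup G // M.Normal ∧ IsOpen (M : Set G) ∧ ∀ a : A, ∀ x ∈ M, a • x ∈ M}
  let S : ι → Set G := fun M => {y | y ∈ H ∧ h⁻¹ * y ∈ N ∧ ∀ b ∈ B, y⁻¹ * (b • y) ∈ M.1}
  have : Nonempty ι := ⟨⟨⊤, inferInstance, isOpen_univ, fun _ _ _ => trivial⟩⟩
  have hS_closed : ∀ M, IsClosed (S M) := fun M => by
    simp only [S, Set.ofPred_and, Set.ofPred_forall]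
    exact hHclosed.inter (((N.isClosed_of_isOpen hNopen).preimage (continuous_const_mul h⁻¹)).inter
      (isClosed_biInter fun b _ =>
        (M.1.isClosed_of_isOpen M.2.2.1).preimage (continuous_inv.mul (hcont b))))
  have hS_nonempty : ∀ M, (S M).Nonempty := fun ⟨M, hMn, hMo, hM⟩ =>
    exists_mem_coset_inv_mul_smul_mem hB hH hN hM (hcoprime M hMn hMo) hh hfix
  have hS_directed : Directed (· ⊇ ·) S := fun M₁ M₂ => by
    have := M₁.2.1
    have := M₂.2.1
    exact ⟨⟨M₁.1 ⊓ M₂.1, inferInstance, M₁.2.2.1.inter M₂.2.2.1,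
      fun a x hx => ⟨M₁.2.2.2 a x hx.1, M₂.2.2.2 a x hx.2⟩⟩,
      fun y hy => ⟨hy.1, hy.2.1, fun b hb => (hy.2.2 b hb).1⟩,
      fun y hy => ⟨hy.1, hy.2.1, fun b hb => (hy.2.2 b hb).2⟩⟩
  obtain ⟨y, hy⟩ := IsCompact.nonempty_iInter_of_directed_nonempty_isCompact_isClosed S
    hS_directed hS_nonempty (fun M => (hS_closed M).isCompact) hS_closed
  have hyS : ∀ M, y ∈ S M := Set.mem_iInter.mp hy
  obtain ⟨hyH, hyN, -⟩ := hyS (Classical.arbitrary ι)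
  refine ⟨y, ⟨hyH, fun b hb => ?_⟩, hyN⟩
  by_contra hne
  -- `y⁻¹ * (b • y)` lies in every invariant open normal subgroup, and these separate it from `1`.
  obtain ⟨M, hMn, hMo, hM, hMsub⟩ := exists_normal_isOpen_smul_mem_subset hcont
    (isOpen_compl_singleton (x := y⁻¹ * (b • y))) fun h1 => hne (inv_mul_eq_one.mp h1.symm).symm
  exact hMsub ((hyS ⟨M, hMn, hMo, hM⟩).2.2 b hb) rfl

theorem le_topologicalClosure_of_forall_map_le [Group A] [Finite A] [MulDistribMulAction A G]
    (hcont : ∀ a : A, Continuous fun g : G => a • g) {H K : Subgroup G}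
    (hHK : ∀ (N : Subgroup G) [N.Normal], IsOpen (N : Set G) → (∀ a : A, ∀ x ∈ N, a • x ∈ N) →
      H.map (QuotientGroup.mk' N) ≤ K.map (QuotientGroup.mk' N)) :
    H ≤ K.topologicalClosure := by
  intro h hh
  refine mem_closure_iff.mpr fun U hU hhU => ?_
  obtain ⟨N, hNn, hNo, hN, hNU⟩ := exists_normal_isOpen_smul_mem_subset hcont
    (hU.preimage (continuous_const_mul h)) (by simpa using hhU)
  obtain ⟨y, hyK, hyh⟩ := hHK N hNo hN ⟨h, hh, rfl⟩
  refine ⟨y, ?_, hyK⟩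
  simpa using hNU (QuotientGroup.eq.mp hyh.symm)

theorem map_le_map_iSup_inf_fixedSubgroupOf [CommGroup A] [Finite A] [Nontrivial A]
    [MulDistribMulAction A G] (hA : ∀ a : A, a ^ q = 1)
    (hcont : ∀ a : A, Continuous fun g : G => a • g)
    (hcoprime : ∀ M : Subgroup G, M.Normal → IsOpen (M : Set G) → ¬ q ∣ M.index)
    {H : Subgroup G} (hHclosed : IsClosed (H : Set G)) (hH : ∀ a : A, ∀ x ∈ H, a • x ∈ H)
    {N : Subgroup G} [N.Normal] (hNopen : IsOpen (N : Set G)) (hN : ∀ a : A, ∀ x ∈ N, a • x ∈ N) :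
    H.map (QuotientGroup.mk' N) ≤
      (⨆ (B : Subgroup A) (_ : IsCoatom B), H ⊓ fixedSubgroupOf (G := G) B).map
        (QuotientGroup.mk' N) := by
  let := QuotientGroup.mulDistribMulActionOfInvariant N hN
  have hAq : IsPGroup q A := .of_forall_pow_eq_one hA
  have hHN : ∀ a : A, ∀ z ∈ H.map (QuotientGroup.mk' N), a • z ∈ H.map (QuotientGroup.mk' N) := by
    rintro a _ ⟨x, hx, rfl⟩
    exact ⟨a • x, hH a x hx, rfl⟩
  have hqHN : ¬ q ∣ Nat.card (H.map (QuotientGroup.mk' N)) := fun hdvd =>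
    hcoprime N inferInstance hNopen
      (hdvd.trans (N.index_eq_card ▸ Subgroup.card_subgroup_dvd_card _))
  refine ((H.map _).le_iSup_inf_fixedSubgroupOf hA hHN hqHN).trans ?_
  simp only [Subgroup.map_iSup]
  refine iSup₂_mono fun B _ => ?_
  rintro _ ⟨⟨x, hx, rfl⟩, hxB⟩
  obtain ⟨y, hy, hxy⟩ := exists_mem_inf_fixedSubgroupOf_inv_mul_mem hcont hcoprime
    (hAq.to_subgroup B) hHclosed hH hNopen hN hx fun b hb => QuotientGroup.eq.mp (hxB b hb).symm
  exact ⟨y, hy, (QuotientGroup.eq.mpr hxy).symm⟩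

end Profinite

theorem stmt_10_general (q : ℕ) (hq : q.Prime) (A G : Type*)
    [CommGroup A] [Group G] [TopologicalSpace G] [IsTopologicalGroup G]
    [CompactSpace G] [TotallyDisconnectedSpace G]
    [MulDistribMulAction A G]
    (hA_card : Nat.card A = q ^ 3) (hA_exp : ∀ a : A, a ^ q = 1)
    (hcont : ∀ a : A, Continuous fun g : G => a • g)
    (hcoprime : ∀ M : Subgroup G, M.Normal → IsOpen (M : Set G) →
      Nat.Coprime M.index (Nat.card A))
    (H : Subgroup G) (hHclosed : IsClosed (H : Set G))
    (hHinv : ∀ a : A, ∀ g ∈ H, a • g ∈ H) :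
    H = (⨆ (B : Subgroup A) (_ : IsCoatom B),
          H ⊓ fixedSubgroupOf (G := G) B).topologicalClosure := by
  have : Fact q.Prime := ⟨hq⟩
  have hA_one_lt : 1 < Nat.card A := hA_card ▸ Nat.one_lt_pow three_ne_zero hq.one_lt
  have : Finite A := Nat.finite_of_card_ne_zero (by omega)
  have : Nontrivial A := Finite.one_lt_card_iff_nontrivial.mp hA_one_lt
  have hqM : ∀ M : Subgroup G, M.Normal → IsOpen (M : Set G) → ¬ q ∣ M.index :=
    fun M hM hMo hdvd => hq.ne_one <| Nat.eq_one_of_dvd_coprimes (hcoprime M hM hMo) hdvd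
      (hA_card ▸ dvd_pow_self q three_ne_zero)
  refine le_antisymm (le_topologicalClosure_of_forall_map_le hcont fun N _ hNo hN => ?_)
    (Subgroup.topologicalClosure_minimal _ (iSup₂_le fun _ _ => inf_le_left) hHclosed)
  exact map_le_map_iSup_inf_fixedSubgroupOf hA_exp hcont hqM hHclosed hHinv hNo hN

/-- **Lemma.** Let `q` be a prime and `G` a profinite group acted on coprimely by an
elementary abelian group `A` of order `q^3`.  If `H` is a closed `A`-invariant subgroup,
then `H` is topologically generated by the fixed-point subgroups `C_H(B)`, where `B`
ranges over the maximal subgroups of `A`. -/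
theorem stmt_10 (q : ℕ) (hq : q.Prime) (A G : Type*)
    [CommGroup A] [Group G] [TopologicalSpace G] [IsTopologicalGroup G]
    [CompactSpace G] [T2Space G] [TotallyDisconnectedSpace G]
    [MulDistribMulAction A G]
    (hA_card : Nat.card A = q ^ 3) (hA_exp : ∀ a : A, a ^ q = 1)
    (hcont : ∀ a : A, Continuous fun g : G => a • g)
    (hcoprime : ∀ M : Subgroup G, M.Normal → IsOpen (M : Set G) →
      Nat.Coprime M.index (Nat.card A))
    (H : Subgroup G) (hHclosed : IsClosed (H : Set G))
    (hHinv : ∀ a : A, ∀ g ∈ H, a • g ∈ H) :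
    H = (⨆ (B : Subgroup A) (_ : IsCoatom B),
          H ⊓ fixedSubgroupOf (G := G) B).topologicalClosure :=
  stmt_10_general q hq A G hA_card hA_exp hcont hcoprime H hHclosed hHinv
end

section
/- Let L be a Lie algebra over a field and H a subalgebra of L generated by r elements h_1, …, h_r such that every commutator in the h_i (i.e., every element of the smallest subset of L containing {h_1, …, h_r} and closed under the Lie bracket) is ad-nilpotent in L. If H is nilpotent as a Lie algebra, then there exists a positive integer v such that [L, H, H, …, H] = 0 with H repeated v times; that is, every left-normed bracket [x, k_1, k_2, …, k_v] with x ∈ L and k_1, …, k_v ∈ H vanishes. -/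
/-!
Since `[x, k₁, …, kᵥ] = (-ad kᵥ) ⋯ (-ad k₁) x`, it suffices that long products of operators
`ad k`, `k ∈ H`, vanish. If the lower central series of `H` vanishes at step `n`, every bracket of
the generators with at least `n` brackets is zero, so `H` is spanned by the finitely many brackets
`u` with at most `n` brackets, and each `ad u` is nilpotent. Give the bracket `u` with `m` brackets
the weight `m + 1`: then `ad u * ad u' - ad u' * ad u = ad ⁅u, u'⁆` is zero or again one of the
`ad u`, of weight the sum of the two weights. Straightening a word in the `ad u` with these
relations writes it as a sum of sorted words of at least the same total weight, and a sorted word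
of large weight is long, hence contains a block `(ad u) ^ N = 0`.
-/

/-- The smallest subset of a Lie ring containing `S` and closed under the Lie bracket:
the set of "commutators in elements of `S`". -/
inductive IsCommutatorIn {L : Type*} [LieRing L] (S : Set L) : L → Prop
  | base {x : L} : x ∈ S → IsCommutatorIn S x
  | bracket {x y : L} : IsCommutatorIn S x → IsCommutatorIn S y →
      IsCommutatorIn S ⁅x, y⁆

/-- An element `a` of a Lie ring is ad-nilpotent if some positive iterate of
`y ↦ ⁅y, a⁆` is identically zero. -/
def IsAdNilpotentElt {L : Type*} [LieRing L] (a : L) : Prop :=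
  ∃ n : ℕ, 0 < n ∧ ∀ x : L, (fun y : L => ⁅y, a⁆)^[n] x = 0

namespace List

variable {ι : Type*} [LinearOrder ι]

def inversionCount : List ι → ℕ
  | [] => 0
  | a :: l => l.countP (· < a) + inversionCount l

theorem inversionCount_append_cons_cons_lt {i j : ι} (hji : j < i) (p q : List ι) :
    inversionCount (p ++ j :: i :: q) < inversionCount (p ++ i :: j :: q) := by
  induction p with
  | nil =>
    simp only [nil_append, inversionCount, countP_cons_of_pos, countP_cons_of_neg, hji,
      not_lt_of_gt hji, decide_true, decide_false, Bool.false_eq_true, not_false_eq_true]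
    omega
  | cons a p ih =>
    have hperm : (p ++ j :: i :: q).Perm (p ++ i :: j :: q) :=
      Perm.append_left p (Perm.swap i j q)
    simp only [cons_append, inversionCount, hperm.countP_eq]
    omega

theorem exists_eq_append_cons_cons_of_not_pairwise {l : List ι} (hl : ¬ l.Pairwise (· ≤ ·)) :
    ∃ p q i j, j < i ∧ l = p ++ i :: j :: q := by
  rw [← isChain_iff_pairwise, isChain_iff_forall_rel_of_append_cons_cons] at hl
  push Not at hl
  obtain ⟨i, j, p, q, hl, hji⟩ := hl
  exact ⟨p, q, i, j, hji, hl⟩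

theorem exists_lt_count_of_mul_lt_length [Fintype ι] {N : ℕ} {l : List ι}
    (hl : Fintype.card ι * N < l.length) : ∃ i, N < l.count i := by
  have hsum : ∑ i, l.count i = l.length := by
    simpa using Multiset.sum_count_eq_card (s := Finset.univ) (m := (l : Multiset ι)) (by simp)
  obtain ⟨i, -, hi⟩ := Finset.exists_lt_of_sum_lt (s := Finset.univ) (f := fun _ => N)
    (g := fun i => l.count i) (by simpa [hsum] using hl)
  exact ⟨i, hi⟩

end List

section Straightening

variable {A ι : Type*} [Ring A] (D : ι → A) (w : ι → ℕ)

def IsCommutatorGraded : Prop :=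
  ∀ i j, D i * D j - D j * D i = 0 ∨ ∃ k, w i + w j ≤ w k ∧ D i * D j - D j * D i = D k

namespace List

variable [LinearOrder ι]

theorem prod_map_eq_pow_count_mul {l : List ι} (hl : l.Pairwise (· ≤ ·)) {i : ι}
    (hi : ∀ x ∈ l, i ≤ x) :
    (l.map D).prod = D i ^ l.count i * ((l.filter (· ≠ i)).map D).prod := by
  induction l with
  | nil => simp
  | cons a t ih =>
    rw [pairwise_cons] at hl
    obtain rfl | hia := (hi a mem_cons_self).eq_or_lt
    · rw [map_cons, prod_cons, ih hl.2 hl.1]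
      simp [pow_succ', mul_assoc]
    · have hnot : i ∉ a :: t := fun hmem =>
        (mem_cons.mp hmem).elim hia.ne fun h => (hia.trans_le (hl.1 i h)).false
      rw [count_eq_zero.mpr hnot, filter_eq_self.mpr
        fun x hx => by simpa using fun h : x = i => hnot (h ▸ hx), pow_zero, one_mul]

theorem prod_map_eq_zero_of_pairwise {l : List ι} (hl : l.Pairwise (· ≤ ·)) {i : ι} {n : ℕ}
    (hD : D i ^ n = 0) (hn : n ≤ l.count i) : (l.map D).prod = 0 := by
  induction l with
  | nil => simp_all
  | cons a t ih =>
    by_cases hai : a = i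
    · subst hai
      rw [prod_map_eq_pow_count_mul D hl (i := a) (by simpa using (pairwise_cons.mp hl).1),
        pow_eq_zero_of_le hn hD, zero_mul]
    · rw [count_cons_of_ne hai] at hn
      rw [map_cons, prod_cons, ih (pairwise_cons.mp hl).2 hn, mul_zero]

/-- Swapping an adjacent inversion `i j` changes the product by the word with `i j` replaced by a
single letter `k` of larger weight, so induction on the length and then on the number of
inversions reduces to sorted words. -/
theorem prod_map_eq_zero_of_forall_sorted (hD : IsCommutatorGraded D w) {W : ℕ}
    (hsorted : ∀ l : List ι, l.Pairwise (· ≤ ·) → W ≤ (l.map w).sum → (l.map D).prod = 0)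
    (l : List ι) (hl : W ≤ (l.map w).sum) : (l.map D).prod = 0 := by
  by_cases hs : l.Pairwise (· ≤ ·)
  · exact hsorted l hs hl
  obtain ⟨p, q, i, j, hji, rfl⟩ := exists_eq_append_cons_cons_of_not_pairwise hs
  have hswap : ((p ++ j :: i :: q).map D).prod = 0 :=
    prod_map_eq_zero_of_forall_sorted hD hsorted _ <| by
      simp only [map_append, map_cons, sum_append, sum_cons] at hl ⊢; omega
  have hexpand : ((p ++ i :: j :: q).map D).prod = ((p ++ j :: i :: q).map D).prod +
      (p.map D).prod * (D i * D j - D j * D i) * (q.map D).prod := by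
    simp only [map_append, map_cons, prod_append, prod_cons]
    noncomm_ring
  rw [hexpand, hswap, zero_add]
  rcases hD i j with h0 | ⟨k, hk, hkD⟩
  · rw [h0, mul_zero, zero_mul]
  · have hshort : ((p ++ k :: q).map D).prod = 0 :=
      prod_map_eq_zero_of_forall_sorted hD hsorted _ <| by
        simp only [map_append, map_cons, sum_append, sum_cons] at hl ⊢; omega
    simpa [hkD, mul_assoc] using hshort
termination_by (l.length, l.inversionCount)
decreasing_by
  all_goals subst_vars; simp only [length_append, length_cons]
  · exact Prod.Lex.right _ (inversionCount_append_cons_cons_lt hji p q)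
  · exact Prod.Lex.left _ _ (by omega)

theorem exists_prod_map_eq_zero [Fintype ι] (hw : ∀ i, 0 < w i) (hnil : ∀ i, IsNilpotent (D i))
    (hD : IsCommutatorGraded D w) : ∃ n, ∀ l : List ι, n ≤ l.length → (l.map D).prod = 0 := by
  choose e he using hnil
  set N := Finset.univ.sup e
  set c := Finset.univ.sup w
  have hDN : ∀ i, D i ^ N = 0 := fun i =>
    pow_eq_zero_of_le (Finset.le_sup (Finset.mem_univ i)) (he i)
  -- A word this long has at least this weight, and a word of this weight has more than
  -- `card ι * N` letters, so one letter occurs more than `N` times.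
  refine ⟨c * (Fintype.card ι * N) + 1, fun l hl => ?_⟩
  have hlw : l.length ≤ (l.map w).sum := by
    simpa using length_le_sum_of_one_le (l.map w)
      (by simpa using fun i _ => Nat.one_le_iff_ne_zero.mpr (hw i).ne')
  refine prod_map_eq_zero_of_forall_sorted D w hD (fun s hs hsw => ?_) l (hl.trans hlw)
  have hsc : (s.map w).sum ≤ c * s.length := by
    have hwc : ∀ x ∈ s.map w, x ≤ c := by
      simpa using fun i _ => Finset.le_sup (f := w) (Finset.mem_univ i)
    simpa [mul_comm] using sum_le_card_nsmul (s.map w) c hwc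
  obtain ⟨i, hi⟩ := exists_lt_count_of_mul_lt_length (N := N) (l := s)
    (lt_of_not_ge fun h => by nlinarith [Nat.mul_le_mul_left c h])
  exact prod_map_eq_zero_of_pairwise D hs (hDN i) hi.le

end List

theorem Submodule.isNilpotent_span_range {R : Type*} [CommRing R] [Algebra R A] [Finite ι]
    (hw : ∀ i, 0 < w i) (hnil : ∀ i, IsNilpotent (D i)) (hD : IsCommutatorGraded D w) :
    IsNilpotent (span R (Set.range D)) := by
  have := Fintype.ofFinite ι
  let : LinearOrder ι := LinearOrder.lift' _ (Fintype.equivFin ι).injective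
  obtain ⟨n, hn⟩ := List.exists_prod_map_eq_zero D w hw hnil hD
  refine ⟨n, ?_⟩
  rw [span_pow, zero_eq_bot, span_eq_bot]
  intro a ha
  obtain ⟨f, rfl⟩ := Set.mem_pow.mp ha
  choose g hg using fun i => (f i).2
  rw [show (fun i => (f i : A)) = D ∘ g from funext fun i => (hg i).symm, ← List.map_ofFn]
  exact hn _ (by simp)

end Straightening

theorem Submodule.list_prod_mem_pow {R A : Type*} [CommSemiring R] [Semiring A] [Algebra R A]
    {M : Submodule R A} {l : List A} (hl : ∀ a ∈ l, a ∈ M) : l.prod ∈ M ^ l.length := by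
  induction l with
  | nil => exact one_le.mp le_rfl
  | cons a l ih =>
    rw [List.prod_cons, List.length_cons, pow_succ']
    exact mul_mem_mul (hl a List.mem_cons_self) (ih fun b hb => hl b (List.mem_cons_of_mem a hb))

theorem LieModule.lie_mem_lowerCentralSeries {R G : Type*} [CommRing R] [LieRing G]
    [LieAlgebra R G] {a b : ℕ} {x y : G} (hx : x ∈ lowerCentralSeries R G G a)
    (hy : y ∈ lowerCentralSeries R G G b) : ⁅x, y⁆ ∈ lowerCentralSeries R G G (a + b + 1) := by
  induction b generalizing a x y with
  | zero =>
    rw [← lie_skew, lowerCentralSeries_succ]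
    exact neg_mem (LieSubmodule.lie_mem_lie (LieSubmodule.mem_top y) hx)
  | succ b ih =>
    rw [lowerCentralSeries_succ, ← LieSubmodule.mem_toSubmodule,
      LieSubmodule.lieIdeal_oper_eq_linear_span] at hy
    induction hy using Submodule.span_induction with
    | mem _ hz =>
      obtain ⟨⟨u, -⟩, ⟨z, hz⟩, rfl⟩ := hz
      have hxu : ⁅x, u⁆ ∈ lowerCentralSeries R G G (a + 1) := by
        rw [← lie_skew, lowerCentralSeries_succ]
        exact neg_mem (LieSubmodule.lie_mem_lie (LieSubmodule.mem_top u) hx)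
      have hxz : ⁅u, ⁅x, z⁆⁆ ∈ lowerCentralSeries R G G (a + b + 1 + 1) := by
        rw [lowerCentralSeries_succ]
        exact LieSubmodule.lie_mem_lie (LieSubmodule.mem_top u) (ih hx hz)
      rw [leibniz_lie]
      exact add_mem (by simpa [add_assoc, add_comm, add_left_comm] using ih hxu hz)
        (by simpa [add_assoc] using hxz)
    | zero => simp
    | add _ _ _ _ h₁ h₂ => simpa [lie_add] using add_mem h₁ h₂
    | smul r _ _ h => simpa [lie_smul] using Submodule.smul_mem _ r h

open Submodule in
theorem LieSubalgebra.coe_lieSpan_eq_span_of_lie_mem {R L : Type*} [CommRing R] [LieRing L]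
    [LieAlgebra R L] {s : Set L} (hs : ∀ x ∈ s, ∀ y ∈ s, ⁅x, y⁆ ∈ s) :
    lieSpan R L s = span R s := by
  suffices ∀ {x y}, x ∈ span R s → y ∈ span R s → ⁅x, y⁆ ∈ span R s by
    refine le_antisymm ?_ submodule_span_le_lieSpan
    change _ ≤ ({ span R s with lie_mem' := this } : LieSubalgebra R L)
    rw [lieSpan_le]
    exact subset_span
  intro x y hx hy
  induction hx, hy using span_induction₂ with
  | mem_mem x y hx hy => exact subset_span (hs x hx y hy)
  | zero_left y hy => simp
  | zero_right x hx => simp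
  | add_left x y z _ _ _ hx hy => simp [add_mem hx hy]
  | add_right x y z _ _ _ hx hy => simp [add_mem hx hy]
  | smul_left r x y _ _ h => simp [smul_mem _ r h]
  | smul_right r x y _ _ h => simp [smul_mem _ r h]

theorem LieAlgebra.foldl_lie_eq_prod_neg_ad (R : Type*) {L : Type*} [CommRing R] [LieRing L]
    [LieAlgebra R L] (l : List L) (x : L) :
    l.foldl (fun y z => ⁅y, z⁆) x = (l.map fun z => -ad R L z).reverse.prod x := by
  induction l generalizing x with
  | nil => simp
  | cons a l ih =>
    simp only [List.foldl_cons, ih, List.map_cons, List.reverse_cons, List.prod_append,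
      List.prod_singleton, Module.End.mul_apply, LinearMap.neg_apply, LieAlgebra.ad_apply,
      lie_skew]

theorem IsAdNilpotentElt.isNilpotent_ad {R L : Type*} [CommRing R] [LieRing L] [LieAlgebra R L]
    {a : L} (ha : IsAdNilpotentElt a) : IsNilpotent (LieAlgebra.ad R L a) := by
  obtain ⟨n, -, hn⟩ := ha
  have hneg : ⇑(-LieAlgebra.ad R L a) = fun y => ⁅y, a⁆ := funext fun y => by simp
  refine isNilpotent_neg_iff.mp ⟨n, LinearMap.ext fun x => ?_⟩
  rw [Module.End.pow_apply, hneg, hn, LinearMap.zero_apply]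

/-- Here `m` counts brackets, not entries: such an `x` has weight `m + 1`. -/
inductive IsIteratedBracket {L : Type*} [LieRing L] (S : Set L) : ℕ → L → Prop
  | of_mem {x : L} : x ∈ S → IsIteratedBracket S 0 x
  | lie {m n : ℕ} {x y : L} : IsIteratedBracket S m x → IsIteratedBracket S n y →
      IsIteratedBracket S (m + n + 1) ⁅x, y⁆

namespace IsIteratedBracket

variable {L : Type*} [LieRing L] {S : Set L}

theorem isCommutatorIn {n : ℕ} {x : L} (hx : IsIteratedBracket S n x) : IsCommutatorIn S x := by
  induction hx with
  | of_mem hx => exact .base hx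
  | lie _ _ ihx ihy => exact .bracket ihx ihy

theorem finite_setOf_le (hS : S.Finite) (n : ℕ) :
    {p : ℕ × L | p.1 ≤ n ∧ IsIteratedBracket S p.1 p.2}.Finite := by
  induction n with
  | zero =>
    refine ((Set.finite_singleton 0).prod hS).subset ?_
    rintro ⟨m, x⟩ ⟨hm, hx⟩
    cases hx with
    | of_mem hx => exact ⟨rfl, hx⟩
    | lie => omega
  | succ n ih =>
    refine (ih.union (ih.image2 (fun p q => (p.1 + q.1 + 1, ⁅p.2, q.2⁆)) ih)).subset ?_
    rintro ⟨m, x⟩ ⟨hm, hx⟩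
    cases hx with
    | of_mem hx => exact .inl ⟨Nat.zero_le n, .of_mem hx⟩
    | @lie a b x y hx hy =>
      have hab : a + b ≤ n := by simpa using hm
      exact .inr ⟨(a, x), ⟨by omega, hx⟩, (b, y), ⟨by omega, hy⟩, rfl⟩

variable {R : Type*} [CommRing R] [LieAlgebra R L]

theorem lieSpan_le_span :
    (LieSubalgebra.lieSpan R L S : Submodule R L) ≤
      Submodule.span R {x | ∃ n, IsIteratedBracket S n x} := by
  have hclosed : ∀ x ∈ {x | ∃ n, IsIteratedBracket S n x},
      ∀ y ∈ {x | ∃ n, IsIteratedBracket S n x}, ⁅x, y⁆ ∈ {x | ∃ n, IsIteratedBracket S n x} := by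
    rintro x ⟨_, hx⟩ y ⟨_, hy⟩
    exact ⟨_, hx.lie hy⟩
  rw [← LieSubalgebra.coe_lieSpan_eq_span_of_lie_mem hclosed]
  exact LieSubalgebra.lieSpan_mono fun x hx => ⟨0, .of_mem hx⟩

theorem exists_mem_lowerCentralSeries {H : LieSubalgebra R L} (hS : S ⊆ H) {n : ℕ} {x : L}
    (hx : IsIteratedBracket S n x) :
    ∃ y ∈ LieModule.lowerCentralSeries R H H n, (y : L) = x := by
  induction hx with
  | of_mem hx => exact ⟨⟨_, hS hx⟩, by simp, rfl⟩
  | lie _ _ ihx ihy =>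
    obtain ⟨y₁, hy₁, rfl⟩ := ihx
    obtain ⟨y₂, hy₂, rfl⟩ := ihy
    exact ⟨⁅y₁, y₂⁆, LieModule.lie_mem_lowerCentralSeries hy₁ hy₂, rfl⟩

theorem eq_zero_of_lowerCentralSeries_eq_bot {H : LieSubalgebra R L} (hS : S ⊆ H) {m n : ℕ}
    {x : L} (hH : LieModule.lowerCentralSeries R H H m = ⊥) (hmn : m ≤ n)
    (hx : IsIteratedBracket S n x) : x = 0 := by
  obtain ⟨y, hy, rfl⟩ := hx.exists_mem_lowerCentralSeries hS
  have hy0 : y ∈ LieModule.lowerCentralSeries R H H m :=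
    LieModule.antitone_lowerCentralSeries R H H hmn hy
  rw [hH, LieSubmodule.mem_bot] at hy0
  simp [hy0]

theorem lieSpan_le_span_of_lowerCentralSeries_eq_bot {n : ℕ}
    (hn : LieModule.lowerCentralSeries R (LieSubalgebra.lieSpan R L S)
      (LieSubalgebra.lieSpan R L S) n = ⊥) :
    (LieSubalgebra.lieSpan R L S : Submodule R L) ≤
      Submodule.span R {x | ∃ m ≤ n, IsIteratedBracket S m x} := by
  refine lieSpan_le_span.trans (Submodule.span_le.mpr ?_)
  rintro x ⟨m, hx⟩
  by_cases hm : m ≤ n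
  · exact Submodule.subset_span ⟨m, hm, hx⟩
  · simp [hx.eq_zero_of_lowerCentralSeries_eq_bot LieSubalgebra.subset_lieSpan hn (by omega)]

end IsIteratedBracket

namespace LieSubalgebra

variable {R L : Type*} [CommRing R] [LieRing L] [LieAlgebra R L]

theorem isNilpotent_map_ad_lieSpan {S : Set L} (hS : S.Finite)
    (hSnil : ∀ n x, IsIteratedBracket S n x → IsNilpotent (LieAlgebra.ad R L x))
    (hnil : LieRing.IsNilpotent (lieSpan R L S)) :
    IsNilpotent ((lieSpan R L S : Submodule R L).map
      (LieAlgebra.ad R L : L →ₗ[R] Module.End R L)) := by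
  obtain ⟨n, hn⟩ := (LieModule.isNilpotent_iff R (lieSpan R L S) (lieSpan R L S)).mp hnil
  let ι := {p : ℕ × L // p.1 ≤ n ∧ IsIteratedBracket S p.1 p.2}
  have : Finite ι := (IsIteratedBracket.finite_setOf_le hS n).to_subtype
  let D : ι → Module.End R L := fun p => LieAlgebra.ad R L p.1.2
  have hD : IsCommutatorGraded D fun p => p.1.1 + 1 := by
    rintro ⟨⟨a, x⟩, ha, hx⟩ ⟨⟨b, y⟩, hb, hy⟩
    have hxy : LieAlgebra.ad R L x * LieAlgebra.ad R L y - LieAlgebra.ad R L y *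
        LieAlgebra.ad R L x = LieAlgebra.ad R L ⁅x, y⁆ :=
      LinearMap.ext fun z => (lie_lie x y z).symm
    dsimp only [D]
    rw [hxy]
    by_cases hab : a + b + 1 ≤ n
    · exact .inr ⟨⟨(a + b + 1, ⁅x, y⁆), hab, hx.lie hy⟩, by dsimp only; omega, rfl⟩
    · have hxy0 := (hx.lie hy).eq_zero_of_lowerCentralSeries_eq_bot subset_lieSpan hn (by omega)
      exact .inl (by rw [hxy0, map_zero])
  obtain ⟨v, hv⟩ := Submodule.isNilpotent_span_range (R := R) D _ (fun _ => Nat.succ_pos _)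
    (fun p => hSnil _ _ p.2.2) hD
  have hle : (lieSpan R L S : Submodule R L).map (LieAlgebra.ad R L : L →ₗ[R] Module.End R L) ≤
      Submodule.span R (Set.range D) := by
    refine (Submodule.map_mono
      (IsIteratedBracket.lieSpan_le_span_of_lowerCentralSeries_eq_bot hn)).trans ?_
    rw [Submodule.map_span]
    refine Submodule.span_mono ?_
    rintro _ ⟨x, ⟨m, hm, hx⟩, rfl⟩
    exact ⟨⟨(m, x), hm, hx⟩, rfl⟩
  have hpow := pow_le_pow_left' hle v
  rw [hv] at hpow
  exact ⟨v, le_bot_iff.mp hpow⟩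

theorem foldl_lie_eq_zero {H : LieSubalgebra R L} {n : ℕ}
    (hn : (H.toSubmodule.map (LieAlgebra.ad R L : L →ₗ[R] Module.End R L)) ^ n = 0)
    {l : List L} (hl : ∀ z ∈ l, z ∈ H) (hlen : l.length = n) (x : L) :
    l.foldl (fun y z => ⁅y, z⁆) x = 0 := by
  have hmem : ∀ a ∈ (l.map fun z => -LieAlgebra.ad R L z).reverse,
      a ∈ H.toSubmodule.map (LieAlgebra.ad R L : L →ₗ[R] Module.End R L) := by
    intro a ha
    obtain ⟨z, hz, rfl⟩ := List.mem_map.mp (List.mem_reverse.mp ha)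
    exact neg_mem (Submodule.mem_map_of_mem (hl z hz))
  have hprod := Submodule.list_prod_mem_pow hmem
  rw [List.length_reverse, List.length_map, hlen, hn, Submodule.zero_eq_bot,
    Submodule.mem_bot] at hprod
  rw [LieAlgebra.foldl_lie_eq_prod_neg_ad R, hprod, LinearMap.zero_apply]

end LieSubalgebra

/-- **Lemma.** Let `L` be a Lie algebra over a field and `H` a subalgebra generated by
`h_1, …, h_r` such that every commutator in the `h_i` is ad-nilpotent in `L`.  If `H` is
nilpotent, then there is `v > 0` with `[L, H, …, H] = 0` (`H` repeated `v` times): every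
left-normed bracket `[x, k_1, …, k_v]` with `x ∈ L`, `k_i ∈ H` vanishes. -/
theorem stmt_14 (k L : Type*) [Field k] [LieRing L] [LieAlgebra k L]
    (r : ℕ) (h : Fin r → L) (H : LieSubalgebra k L)
    (hH : H = LieSubalgebra.lieSpan k L (Set.range h))
    (had : ∀ x : L, IsCommutatorIn (Set.range h) x → IsAdNilpotentElt x)
    (hnilp : LieRing.IsNilpotent ↥H) :
    ∃ v : ℕ, 0 < v ∧ ∀ (x : L) (c : Fin v → L), (∀ i, c i ∈ H) →
      (List.ofFn c).foldl (fun y z : L => ⁅y, z⁆) x = 0 := by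
  subst hH
  obtain ⟨v, hv⟩ := LieSubalgebra.isNilpotent_map_ad_lieSpan (Set.finite_range h)
    (fun _ x hx => (had x hx.isCommutatorIn).isNilpotent_ad) hnilp
  refine ⟨v + 1, v.succ_pos, fun x c hc => ?_⟩
  refine LieSubalgebra.foldl_lie_eq_zero (by rw [pow_succ, hv, zero_mul]) ?_ (List.length_ofFn) x
  intro z hz
  obtain ⟨i, rfl⟩ := List.mem_ofFn.mp hz
  exact hc i
end

section
/- Let p be a prime and K a pro-p group (a profinite group in which every open normal subgroup has index a power of p) such that the derived group K' (the closure of the commutator subgroup of K) is periodic. Then K satisfies a coset identity of the following form: there exist a nonnegative integer j, an open subgroup H of K, and elements x, y ∈ K such that [x h_1, y h_2]^{p^j} = 1 for all h_1, h_2 ∈ H, where [u, v] = u^{-1} v^{-1} u v. -/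
/-!
Finite-order elements of a pro-`p` group have `p`-power order: an element whose order is prime
to `p` dies in every finite quotient `K ⧸ N`, these being `p`-groups, and the open normal
subgroups separate points. Hence `K × K` is the countable union of the closed sets
`F j = {(x, y) | [x, y] ^ p ^ j = 1}`, so by the Baire category theorem some `F j` has an
interior point `(x, y)`, and a neighbourhood of it contains `x H × y H` for an open subgroup `H`.
-/

open Filter Topology

section ProP

variable {p : ℕ} {K : Type*} [Group K] [TopologicalSpace K]

theorem isPGroup_quotient_openNormalSubgroup
    (hpro_p : ∀ N : Subgroup K, N.Normal → IsOpen (N : Set K) → ∃ n : ℕ, N.index = p ^ n)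
    (N : OpenNormalSubgroup K) : IsPGroup p (K ⧸ (N : Subgroup K)) := by
  obtain ⟨n, hn⟩ := hpro_p N N.isNormal' N.isOpen'
  exact IsPGroup.of_card (n := n) hn

variable [IsTopologicalGroup K] [CompactSpace K] [TotallyDisconnectedSpace K]

theorem eq_one_of_pow_eq_one_of_coprime
    (hpro_p : ∀ N : Subgroup K, N.Normal → IsOpen (N : Set K) → ∃ n : ℕ, N.index = p ^ n)
    {d : K} {m : ℕ} (hm : p.Coprime m) (hd : d ^ m = 1) : d = 1 := by
  by_contra hd1
  obtain ⟨N, hN⟩ := ProfiniteGrp.exist_openNormalSubgroup_sub_open_nhds_of_one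
    isOpen_compl_singleton (Ne.symm hd1)
  have hdN : d ∉ (N : Subgroup K) := fun h => hN h rfl
  have hord : orderOf (d : K ⧸ (N : Subgroup K)) = 1 :=
    ((isPGroup_quotient_openNormalSubgroup hpro_p N).orderOf_coprime hm _).eq_one_of_dvd
      (orderOf_dvd_of_pow_eq_one (by rw [← QuotientGroup.mk_pow, hd, QuotientGroup.mk_one]))
  exact hdN ((QuotientGroup.eq_one_iff d).mp (orderOf_eq_one_iff.mp hord))

theorem exists_pow_prime_pow_eq_one (hp : p.Prime)
    (hpro_p : ∀ N : Subgroup K, N.Normal → IsOpen (N : Set K) → ∃ n : ℕ, N.index = p ^ n)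
    {c : K} (hc : IsOfFinOrder c) : ∃ j : ℕ, c ^ p ^ j = 1 := by
  refine ⟨(orderOf c).factorization p, eq_one_of_pow_eq_one_of_coprime hpro_p
    (Nat.coprime_ordCompl hp hc.orderOf_pos.ne') ?_⟩
  rw [← pow_mul, Nat.ordProj_mul_ordCompl_eq_self, pow_orderOf_eq_one]

end ProP

section Baire

variable {K : Type*} [Group K] [TopologicalSpace K] [IsTopologicalGroup K]
  [CompactSpace K] [TotallyDisconnectedSpace K]

theorem exists_openSubgroup_forall_mem_of_mem_nhds {x y : K} {s : Set (K × K)}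
    (hs : s ∈ 𝓝 (x, y)) : ∃ H : OpenSubgroup K, ∀ h₁ ∈ H, ∀ h₂ ∈ H, (x * h₁, y * h₂) ∈ s := by
  have hcont : Continuous fun h : K × K => (x * h.1, y * h.2) := by fun_prop
  have hpre : (fun h : K × K => (x * h.1, y * h.2)) ⁻¹' s ∈ 𝓝 (1 : K) ×ˢ 𝓝 1 := by
    rw [← nhds_prod_eq]
    exact hcont.continuousAt.preimage_mem_nhds (by simpa using hs)
  obtain ⟨t, ht, hts⟩ := mem_prod_self_iff.mp hpre
  obtain ⟨N, hN⟩ := ProfiniteGrp.exist_openNormalSubgroup_sub_open_nhds_of_one isOpen_interior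
    (mem_interior_iff_mem_nhds.mpr ht)
  exact ⟨N.toOpenSubgroup, fun h₁ h₁N h₂ h₂N =>
    hts (Set.mk_mem_prod (interior_subset (hN h₁N)) (interior_subset (hN h₂N)))⟩

theorem exists_openSubgroup_forall_mem_of_iUnion_isClosed {ι : Type*} [Countable ι]
    {F : ι → Set (K × K)} (hclosed : ∀ i, IsClosed (F i)) (hcover : ⋃ i, F i = Set.univ) :
    ∃ (i : ι) (H : OpenSubgroup K) (x y : K), ∀ h₁ ∈ H, ∀ h₂ ∈ H, (x * h₁, y * h₂) ∈ F i := by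
  obtain ⟨i, z, hz⟩ := nonempty_interior_of_iUnion_of_closed hclosed hcover
  obtain ⟨H, hH⟩ := exists_openSubgroup_forall_mem_of_mem_nhds (mem_interior_iff_mem_nhds.mp hz)
  exact ⟨i, H, z.1, z.2, hH⟩

end Baire

theorem stmt_15_general (p : ℕ) (hp : p.Prime) (K : Type*)
    [Group K] [TopologicalSpace K] [IsTopologicalGroup K]
    [CompactSpace K] [TotallyDisconnectedSpace K]
    (hpro_p : ∀ N : Subgroup K, N.Normal → IsOpen (N : Set K) →
      ∃ n : ℕ, N.index = p ^ n)
    (hper : ∀ g ∈ (commutator K).topologicalClosure, IsOfFinOrder g) :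
    ∃ (j : ℕ) (H : Subgroup K) (x y : K), IsOpen (H : Set K) ∧
      ∀ h₁ ∈ H, ∀ h₂ ∈ H,
        ((x * h₁)⁻¹ * (y * h₂)⁻¹ * (x * h₁) * (y * h₂)) ^ (p ^ j) = 1 := by
  set F : ℕ → Set (K × K) := fun j => {z | (z.1⁻¹ * z.2⁻¹ * z.1 * z.2) ^ p ^ j = 1}
  have hclosed : ∀ j, IsClosed (F j) := fun j =>
    isClosed_singleton.preimage (by fun_prop)
  have hcover : ⋃ j, F j = Set.univ := by
    refine Set.eq_univ_of_forall fun z => Set.mem_iUnion.mpr ?_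
    have hz : z.1⁻¹ * z.2⁻¹ * z.1 * z.2 ∈ commutator K := by
      rw [commutator_def]
      simpa [commutatorElement_def] using
        Subgroup.commutator_mem_commutator (Subgroup.mem_top z.1⁻¹) (Subgroup.mem_top z.2⁻¹)
    exact exists_pow_prime_pow_eq_one hp hpro_p (hper _ ((commutator K).le_topologicalClosure hz))
  obtain ⟨j, H, x, y, hH⟩ := exists_openSubgroup_forall_mem_of_iUnion_isClosed hclosed hcover
  exact ⟨j, H, x, y, H.isOpen, hH⟩

/-- **Lemma.** Let `p` be a prime and `K` a pro-`p` group whose derived group (the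
closure of the commutator subgroup) is periodic.  Then `K` satisfies a coset identity:
there are `j : ℕ`, an open subgroup `H ≤ K` and `x y : K` such that
`[x h₁, y h₂] ^ (p ^ j) = 1` for all `h₁ h₂ ∈ H`. -/
theorem stmt_15 (p : ℕ) (hp : p.Prime) (K : Type*)
    [Group K] [TopologicalSpace K] [IsTopologicalGroup K]
    [CompactSpace K] [T2Space K] [TotallyDisconnectedSpace K]
    (hpro_p : ∀ N : Subgroup K, N.Normal → IsOpen (N : Set K) →
      ∃ n : ℕ, N.index = p ^ n)
    (hper : ∀ g ∈ (commutator K).topologicalClosure, IsOfFinOrder g) :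
    ∃ (j : ℕ) (H : Subgroup K) (x y : K), IsOpen (H : Set K) ∧
      ∀ h₁ ∈ H, ∀ h₂ ∈ H,
        ((x * h₁)⁻¹ * (y * h₂)⁻¹ * (x * h₁) * (y * h₂)) ^ (p ^ j) = 1 :=
  stmt_15_general p hp K hpro_p hper
end
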